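/- arXiv:2012.00488 — 4 statements merged into one kernel-verified Lean document; each statement's English description precedes it below -/
import Mathlib

section
/- If p_1 ≥ p_2 ≥ ... ≥ p_n are probabilities in [0,1] and v_1 ≥ v_2 ≥ ... ≥ v_n ≥ 0 are item values, then for any k ≤ n, Σ_{i=1}^n p_i v_i ≥ ((1/k) Σ_{i=1}^k p_i) · Σ_{i=1}^k v_i. -/
open Finset

/-- Chebyshev's sum inequality. -/
theorem AntitoneOn.inv_card_mul_sum_mul_sum_le_sum_mul {ι : Type*} [LinearOrder ι]
    {s : Finset ι} {f g : ι → ℝ} (hf : AntitoneOn f s) (hg : AntitoneOn g s) :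
    ((1 / (#s : ℝ)) * ∑ i ∈ s, f i) * ∑ i ∈ s, g i ≤ ∑ i ∈ s, f i * g i := by
  rcases s.eq_empty_or_nonempty with rfl | hs
  · simp
  rw [one_div, mul_assoc, inv_mul_le_iff₀ (by exact_mod_cast hs.card_pos)]
  exact (hf.monovaryOn hg).sum_mul_sum_le_card_mul_sum

theorem antitoneOn_range_of_le {n k : ℕ} (hk : k ≤ n) {f : ℕ → ℝ}
    (hf : ∀ i j, i ≤ j → j < n → f j ≤ f i) : AntitoneOn f (range k : Set ℕ) :=
  fun i _ j hj hij => hf i j hij ((mem_range.mp hj).trans_le hk)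

theorem stmt_6 (n k : ℕ) (hk : k ≤ n) (p v : ℕ → ℝ)
    (hp01 : ∀ i < n, 0 ≤ p i ∧ p i ≤ 1)
    (hpmono : ∀ i j, i ≤ j → j < n → p j ≤ p i)
    (hv0 : ∀ i < n, 0 ≤ v i)
    (hvmono : ∀ i j, i ≤ j → j < n → v j ≤ v i) :
    (∑ i ∈ Finset.range n, p i * v i) ≥
      ((1 / (k : ℝ)) * ∑ i ∈ Finset.range k, p i) * ∑ i ∈ Finset.range k, v i := by
  have chebyshev := (antitoneOn_range_of_le hk hpmono).inv_card_mul_sum_mul_sum_le_sum_mul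
    (antitoneOn_range_of_le hk hvmono)
  rw [card_range] at chebyshev
  refine chebyshev.trans (sum_le_sum_of_subset_of_nonneg (range_subset_range.mpr hk) ?_)
  intro i hi _
  have hin := mem_range.mp hi
  exact mul_nonneg (hp01 i hin).1 (hv0 i hin)
end

section
/- Let j ≥ 0 and r ≥ 2 be integers and y > 0 real. Define α_ℓ = C(j+r-1, ℓ+r-1) for 0 ≤ ℓ ≤ j and F(x) = −(Σ_{ℓ=0}^{j} α_ℓ·x^{j-ℓ}·y^ℓ) / (α_0·(r-1)·(x+y)^{r+j-1}). Then for all x ≥ 0, F'(x) = x^j/(x+y)^{r+j}. -/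
/-!
With `m = r - 1` and `n = j + m`, the quotient rule reduces the claim to the Euler-type identity
`n P - (x + y) P' = m C(n, m) x ^ j` for the numerator `P`. Termwise, `n - (j - ℓ) = ℓ + m` and
`(ℓ + m + 1) C(n, ℓ + m + 1) = (j - ℓ) C(n, ℓ + m)` turn the left side into a telescoping sum of
`(ℓ + m) C(n, ℓ + m) x ^ (j - ℓ) y ^ ℓ`, which collapses to its `ℓ = 0` term.
-/

open Finset

theorem HasDerivAt.neg_div_const_mul_add_pow {𝕜 : Type*} [NontriviallyNormedField 𝕜]
    {P : 𝕜 → 𝕜} {P' c g x y : 𝕜} {n : ℕ}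
    (hP : HasDerivAt P P' x) (hc : c ≠ 0) (hxy : x + y ≠ 0)
    (h : n * P x - (x + y) * P' = c * g) :
    HasDerivAt (fun x => -P x / (c * (x + y) ^ n)) (g / (x + y) ^ (n + 1)) x := by
  have hD : HasDerivAt (fun x => c * (x + y) ^ n) (c * (n * (x + y) ^ (n - 1))) x := by
    simpa using (((hasDerivAt_id x).add_const y).fun_pow n).const_mul c
  refine (hP.fun_neg.fun_div hD (mul_ne_zero hc (pow_ne_zero n hxy))).congr_deriv ?_
  rcases n with _ | n
  · simp only [Nat.cast_zero, zero_mul] at h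
    field_simp
    linear_combination h
  · push_cast at h ⊢
    rw [div_eq_div_iff (by simp [hc, hxy]) (pow_ne_zero _ hxy)]
    linear_combination c * (x + y) ^ (2 * n + 2) * h

theorem hasDerivAt_pow_mul_sum {𝕜 : Type*} [NontriviallyNormedField 𝕜] (a : ℕ → 𝕜) (j : ℕ)
    (x y : 𝕜) :
    HasDerivAt (fun x => ∑ ℓ ∈ range (j + 1), a ℓ * x ^ (j - ℓ) * y ^ ℓ)
      (∑ ℓ ∈ range (j + 1), a ℓ * (((j - ℓ : ℕ) : 𝕜) * x ^ (j - ℓ - 1)) * y ^ ℓ) x :=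
  HasDerivAt.fun_sum fun ℓ _ => ((hasDerivAt_pow (j - ℓ) x).const_mul (a ℓ)).mul_const (y ^ ℓ)

theorem natCast_mul_pow_sub_one_mul {R : Type*} [Semiring R] (k : ℕ) (x : R) : (k : R) * x ^ (k - 1) * x = k * x ^ k := by
  rcases k with _ | k
  · simp
  · simp [pow_succ, mul_assoc]

theorem succ_mul_choose_add_succ (j m ℓ : ℕ) :
    ((ℓ + m + 1 : ℕ) : ℝ) * (j + m).choose (ℓ + m + 1) = (j - ℓ : ℕ) * (j + m).choose (ℓ + m) := by
  have h := Nat.choose_succ_right_eq (j + m) (ℓ + m)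
  rw [show j + m - (ℓ + m) = j - ℓ by omega] at h
  exact_mod_cast by linarith [h]

theorem choose_term_telescope (j m ℓ : ℕ) (hℓ : ℓ ≤ j) (x y : ℝ) :
    ((j + m : ℕ) : ℝ) * ((j + m).choose (ℓ + m) * x ^ (j - ℓ) * y ^ ℓ)
        - (x + y) * ((j + m).choose (ℓ + m) * ((j - ℓ : ℕ) * x ^ (j - ℓ - 1)) * y ^ ℓ)
      = ((ℓ + m : ℕ) : ℝ) * (j + m).choose (ℓ + m) * x ^ (j - ℓ) * y ^ ℓ
        - ((ℓ + 1 + m : ℕ) : ℝ) * (j + m).choose (ℓ + 1 + m) * x ^ (j - (ℓ + 1)) * y ^ (ℓ + 1) := by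
  rw [show j - (ℓ + 1) = j - ℓ - 1 by omega, show ℓ + 1 + m = ℓ + m + 1 by omega,
    succ_mul_choose_add_succ]
  have hjm : ((j + m : ℕ) : ℝ) = ((ℓ + m : ℕ) : ℝ) + ((j - ℓ : ℕ) : ℝ) := by
    rw [← Nat.cast_add]
    congr 1
    omega
  linear_combination ((j + m).choose (ℓ + m) * y ^ ℓ) *
    (x ^ (j - ℓ) * hjm - natCast_mul_pow_sub_one_mul (j - ℓ) x)

theorem sum_choose_telescope (j m : ℕ) (x y : ℝ) :
    ((j + m : ℕ) : ℝ) * ∑ ℓ ∈ range (j + 1), ((j + m).choose (ℓ + m) : ℝ) * x ^ (j - ℓ) * y ^ ℓ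
        - (x + y) * ∑ ℓ ∈ range (j + 1),
            ((j + m).choose (ℓ + m) : ℝ) * ((j - ℓ : ℕ) * x ^ (j - ℓ - 1)) * y ^ ℓ
      = (j + m).choose m * m * x ^ j := by
  rw [mul_sum, mul_sum, ← sum_sub_distrib,
    sum_congr rfl fun ℓ hℓ => choose_term_telescope j m ℓ (by simpa [Nat.lt_succ_iff] using hℓ) x y,
    sum_range_sub' (fun ℓ => ((ℓ + m : ℕ) : ℝ) * (j + m).choose (ℓ + m) * x ^ (j - ℓ) * y ^ ℓ),
    Nat.choose_eq_zero_of_lt (by omega : j + m < j + 1 + m)]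
  simp only [zero_add, Nat.sub_zero, pow_zero, Nat.cast_zero, mul_zero, zero_mul, sub_zero]
  ring

theorem hasDerivAt_neg_sum_choose_div (j : ℕ) {m : ℕ} (hm : m ≠ 0) {x y : ℝ} (hxy : x + y ≠ 0) :
    HasDerivAt
      (fun x => -(∑ ℓ ∈ range (j + 1), ((j + m).choose (ℓ + m) : ℝ) * x ^ (j - ℓ) * y ^ ℓ) /
        ((j + m).choose m * m * (x + y) ^ (j + m)))
      (x ^ j / (x + y) ^ (j + m + 1)) x :=
  (hasDerivAt_pow_mul_sum _ j x y).neg_div_const_mul_add_pow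
    (by have := Nat.choose_pos (Nat.le_add_left m j); positivity) hxy (sum_choose_telescope j m x y)

theorem stmt_12 (j r : ℕ) (hr : 2 ≤ r) (y : ℝ) (hy : 0 < y) :
    let α : ℕ → ℝ := fun ℓ => (Nat.choose (j + r - 1) (ℓ + r - 1) : ℝ)
    let F : ℝ → ℝ := fun x =>
      -(∑ ℓ ∈ Finset.range (j + 1), α ℓ * x ^ (j - ℓ) * y ^ ℓ) /
        (α 0 * ((r : ℝ) - 1) * (x + y) ^ (r + j - 1))
    ∀ x : ℝ, 0 ≤ x → HasDerivAt F (x ^ j / (x + y) ^ (r + j)) x := by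
  intro α F x hx
  obtain ⟨m, rfl⟩ : ∃ m, r = m + 1 := ⟨r - 1, by omega⟩
  convert hasDerivAt_neg_sum_choose_div j (m := m) (by omega) (add_pos_of_nonneg_of_pos hx hy).ne'
    using 1
  · funext x
    simp only [F, α, Nat.add_succ_sub_one, Nat.cast_add_one, add_sub_cancel_right, zero_add,
      show m + 1 + j - 1 = j + m by omega]
  · rw [show m + 1 + j = j + m + 1 by omega]
end

section
/- Let c ∈ (0,1), t, n natural numbers with t − 1 = c·n and t ≥ 3. Then the sum Σ_{i=t}^{n-1} (n−i)/((i−2)(i−1)) is bounded below by 1/c − ln(1/c) − 1 − 1/(c·t) and bounded above by 1/c − ln(1/c) − 1 + ξ, where ξ = (n−t+2)/(t−2)² + (n−t+1)/(t−1)². -/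
/-!
Writing `n - i = (n - 2) - (i - 2)` and `1 / ((i - 2) (i - 1)) = 1 / (i - 2) - 1 / (i - 1)`, the sum
telescopes to `(n - 2) / (t - 2) - 1 - ∑ 1 / (i - 1)`. The remaining harmonic-type sum lies between
`log ((n - 1) / (t - 1))` and `log ((n - 2) / (t - 2))`, by `(y - x) / y ≤ log y - log x ≤ (y - x) / x`
applied term by term. Since `1 / c = n / (t - 1)`, what is left are elementary inequalities in `t ≤ n`.
-/

open Finset Real

lemma log_sub_log_le_sub_div {x y : ℝ} (hx : 0 < x) (hy : 0 < y) :
    log y - log x ≤ (y - x) / x := by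
  have h := log_le_sub_one_of_pos (div_pos hy hx)
  rwa [log_div hy.ne' hx.ne', div_sub_one hx.ne'] at h

lemma sub_div_le_log_sub_log {x y : ℝ} (hx : 0 < x) (hy : 0 < y) :
    (y - x) / y ≤ log y - log x := by
  have h := one_sub_inv_le_log_of_pos (div_pos hy hx)
  rwa [log_div hy.ne' hx.ne', inv_div, one_sub_div hy.ne'] at h

lemma log_sub_log_le_sum_inv {a : ℝ} {m n : ℕ} (hmn : m ≤ n) (ha : a < m) :
    log (n - a) - log (m - a) ≤ ∑ i ∈ Ico m n, 1 / ((i : ℝ) - a) := by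
  rw [← sum_Ico_sub (fun i : ℕ ↦ log ((i : ℝ) - a)) hmn]
  refine sum_le_sum fun i hi ↦ ?_
  have hi : a < i := ha.trans_le (by exact_mod_cast (mem_Ico.1 hi).1)
  have h := log_sub_log_le_sub_div (sub_pos.2 hi) (by linarith : (0 : ℝ) < i + 1 - a)
  rw [show (i : ℝ) + 1 - a - (i - a) = 1 by ring] at h
  simpa using h

lemma sum_inv_le_log_sub_log {a : ℝ} {m n : ℕ} (hmn : m ≤ n) (ha : a + 1 < m) :
    ∑ i ∈ Ico m n, 1 / ((i : ℝ) - a) ≤ log (n - (a + 1)) - log (m - (a + 1)) := by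
  rw [← sum_Ico_sub (fun i : ℕ ↦ log ((i : ℝ) - (a + 1))) hmn]
  refine sum_le_sum fun i hi ↦ ?_
  have hi : a + 1 < i := ha.trans_le (by exact_mod_cast (mem_Ico.1 hi).1)
  have h := sub_div_le_log_sub_log (sub_pos.2 hi) (by linarith : (0 : ℝ) < i - a)
  rw [show (i : ℝ) - a - (i - (a + 1)) = 1 by ring] at h
  simpa [add_sub_add_right_eq_sub] using h

lemma sum_Ico_sub_div_eq {t n : ℕ} (ht : 3 ≤ t) (htn : t ≤ n) :
    ∑ i ∈ Ico t n, ((n : ℝ) - i) / ((i - 2) * (i - 1)) =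
      (n - 2) / (t - 2) - 1 - ∑ i ∈ Ico t n, 1 / ((i : ℝ) - 1) := by
  set f : ℕ → ℝ := fun j ↦ -1 / ((j : ℝ) - 2)
  have hterm : ∀ i ∈ Ico t n, ((n : ℝ) - i) / ((i - 2) * (i - 1)) =
      (n - 2) * (f (i + 1) - f i) - 1 / ((i : ℝ) - 1) := by
    intro i hi
    have hi : (3 : ℝ) ≤ i := by exact_mod_cast ht.trans (mem_Ico.1 hi).1
    have h1 : (i : ℝ) - 2 ≠ 0 := by linarith
    have h2 : (i : ℝ) - 1 ≠ 0 := by linarith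
    have h3 : (i : ℝ) + 1 - 2 ≠ 0 := by linarith
    simp only [f, Nat.cast_add_one]
    field_simp
    ring
  have hn : (n : ℝ) - 2 ≠ 0 := by
    have : (3 : ℝ) ≤ n := by exact_mod_cast ht.trans htn
    linarith
  have ht2 : (t : ℝ) - 2 ≠ 0 := by
    have : (3 : ℝ) ≤ t := by exact_mod_cast ht
    linarith
  rw [sum_congr rfl hterm, sum_sub_distrib, ← mul_sum, sum_Ico_sub f htn]
  simp only [f]
  field_simp
  ring

lemma le_sum_Ico_sub_div {t n : ℕ} (ht : 3 ≤ t) (htn : t ≤ n) :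
    (n : ℝ) / (t - 1) - log (n / (t - 1)) - 1 - n / ((t - 1) * t) ≤
      ∑ i ∈ Ico t n, ((n : ℝ) - i) / ((i - 2) * (i - 1)) := by
  have hU := sum_inv_le_log_sub_log (a := 1) htn (by exact_mod_cast ht)
  rw [one_add_one_eq_two] at hU
  rw [sum_Ico_sub_div_eq ht htn]
  have hT : (3 : ℝ) ≤ t := by exact_mod_cast ht
  have hTN : (t : ℝ) ≤ n := by exact_mod_cast htn
  set T : ℝ := (t : ℝ)
  set N : ℝ := (n : ℝ)
  rw [← log_div (by linarith) (by linarith)] at hU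
  set a := (N - 2) / (T - 2)
  set b := N / (T - 1)
  have ha : 0 < a := div_pos (by linarith) (by linarith)
  have hb : 0 < b := div_pos (by linarith) (by linarith)
  have hlog := sub_div_le_log_sub_log ha hb
  have hpoly : T * ((2 * T - 2 - N) * (N - T + 1)) ≤ N ^ 2 * (T - 2) := by
    nlinarith [sq_nonneg (3 * T - 3 - 2 * N), sq_nonneg (N - T), sq_nonneg (N - T + 1),
      mul_nonneg (sub_nonneg.2 hTN) (show (0 : ℝ) ≤ T - 2 by linarith)]
  have hab : b - a - (b - a) / b ≤ N / ((T - 1) * T) := by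
    have hT1 : 0 < T - 1 := by linarith
    have hT2 : 0 < T - 2 := by linarith
    have hN : 0 < N := by linarith
    have e : b - a - (b - a) / b = (2 * T - 2 - N) * (N - T + 1) / ((T - 1) * (T - 2) * N) := by
      simp only [a, b]
      field_simp
      ring
    rw [e, div_le_div_iff₀ (by positivity) (by positivity)]
    nlinarith [mul_le_mul_of_nonneg_left hpoly (sq_nonneg (T - 1))]
  linarith

lemma sum_Ico_sub_div_le {t n : ℕ} (ht : 3 ≤ t) (htn : t ≤ n) :
    ∑ i ∈ Ico t n, ((n : ℝ) - i) / ((i - 2) * (i - 1)) ≤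
      (n : ℝ) / (t - 1) - log (n / (t - 1)) - 1 +
        ((n - t + 2) / (t - 2) ^ 2 + (n - t + 1) / (t - 1) ^ 2) := by
  have hU := log_sub_log_le_sum_inv (a := 1) htn (by exact_mod_cast (by omega : 1 < t))
  rw [sum_Ico_sub_div_eq ht htn]
  have hT : (3 : ℝ) ≤ t := by exact_mod_cast ht
  have hTN : (t : ℝ) ≤ n := by exact_mod_cast htn
  set T : ℝ := (t : ℝ)
  set N : ℝ := (n : ℝ)
  have hlog := log_sub_log_le_sub_div (by linarith : 0 < N - 1) (by linarith : 0 < N)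
  rw [sub_sub_cancel] at hlog
  rw [log_div (by linarith) (by linarith)]
  have hpoly : (N - 2) / (T - 2) - N / (T - 1) + 1 / (N - 1) ≤
      (N - T + 2) / (T - 2) ^ 2 + (N - T + 1) / (T - 1) ^ 2 := by
    have e : (N - T + 2) / (T - 2) ^ 2 - ((N - 2) / (T - 2) - N / (T - 1)) =
        (N + (T - 1) * (T - 2)) / ((T - 2) ^ 2 * (T - 1)) := by
      have : T - 1 ≠ 0 := by linarith
      have : T - 2 ≠ 0 := by linarith
      field_simp
      ring
    have h1 : 1 / (N - 1) ≤ (N + (T - 1) * (T - 2)) / ((T - 2) ^ 2 * (T - 1)) := by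
      rw [div_le_div_iff₀ (by linarith) (by nlinarith)]
      nlinarith [mul_nonneg (sub_nonneg.2 hTN) (show (0 : ℝ) ≤ (T - 1) * (T - 2) by nlinarith),
        mul_nonneg (sub_nonneg.2 hTN) (show (0 : ℝ) ≤ T - 2 by linarith)]
    have h2 : 0 ≤ (N - T + 1) / (T - 1) ^ 2 := div_nonneg (by linarith) (sq_nonneg _)
    linarith
  linarith

theorem stmt_16_general (c : ℝ) (hc1 : c < 1) (t n : ℕ)
    (ht : (t : ℝ) - 1 = c * n) (ht3 : 3 ≤ t) :
    let ξ : ℝ := ((n : ℝ) - t + 2) / ((t : ℝ) - 2) ^ 2 +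
      ((n : ℝ) - t + 1) / ((t : ℝ) - 1) ^ 2
    1 / c - Real.log (1 / c) - 1 - 1 / (c * t) ≤
        (∑ i ∈ Finset.Ico t n, ((n : ℝ) - i) / (((i : ℝ) - 2) * ((i : ℝ) - 1))) ∧
      (∑ i ∈ Finset.Ico t n, ((n : ℝ) - i) / (((i : ℝ) - 2) * ((i : ℝ) - 1))) ≤
        1 / c - Real.log (1 / c) - 1 + ξ := by
  intro ξ
  have hT : (3 : ℝ) ≤ t := by exact_mod_cast ht3
  have hn : 0 < (n : ℝ) := by
    rcases n.eq_zero_or_pos with rfl | hn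
    · rw [Nat.cast_zero, mul_zero] at ht
      linarith
    · exact_mod_cast hn
  have htn : t ≤ n := by
    have : (t : ℝ) < n + 1 := by linarith [mul_lt_of_lt_one_left hn hc1]
    exact Nat.lt_succ_iff.1 (by exact_mod_cast this)
  have hc : c = (t - 1) / n := by rw [ht, mul_div_cancel_right₀ _ hn.ne']
  subst hc
  have hct : 1 / (((t : ℝ) - 1) / n * t) = n / ((t - 1) * t) := by field_simp
  rw [one_div_div, hct]
  exact ⟨le_sum_Ico_sub_div ht3 htn, sum_Ico_sub_div_le ht3 htn⟩

theorem stmt_16 (c : ℝ) (hc0 : 0 < c) (hc1 : c < 1) (t n : ℕ)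
    (ht : (t : ℝ) - 1 = c * n) (ht3 : 3 ≤ t) :
    let ξ : ℝ := ((n : ℝ) - t + 2) / ((t : ℝ) - 2) ^ 2 +
      ((n : ℝ) - t + 1) / ((t : ℝ) - 1) ^ 2
    1 / c - Real.log (1 / c) - 1 - 1 / (c * t) ≤
        (∑ i ∈ Finset.Ico t n, ((n : ℝ) - i) / (((i : ℝ) - 2) * ((i : ℝ) - 1))) ∧
      (∑ i ∈ Finset.Ico t n, ((n : ℝ) - i) / (((i : ℝ) - 2) * ((i : ℝ) - 1))) ≤
        1 / c - Real.log (1 / c) - 1 + ξ :=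
  stmt_16_general c hc1 t n ht ht3
end

section
/- The function g(c) = c·ln(1/c) + (c²/2)·(1/c − ln(1/c) − 1) defined on (0,1) satisfies g(c) > 1/e for c = 0.3521; in particular g(0.3521) ≥ 0.4168. -/
/-! For fixed `c ∈ (0, 2]` the expression `g c = c (1 - c/2) · log (1/c) + c/2 - c²/2` is increasing
in `log (1/c)`, so it suffices to bound `log (1 / 0.3521) ≥ 1.0436`, i.e. `exp 1.0436 ≤ 1 / 0.3521`;
this follows from `e < 2.7182818286` and a third-order Taylor bound on `exp 0.0436`.
The first claim then follows from `1/e < 0.368 < 0.4168`. -/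

open Real

lemma exp_0436_le : exp 0.0436 ≤ 1.044569 := by
  have h := exp_bound' (x := 0.0436) (by norm_num) (by norm_num) (n := 3) (by norm_num)
  simp only [Finset.sum_range_succ, Finset.sum_range_zero] at h
  norm_num [Nat.factorial] at h
  linarith

lemma log_inv_0_3521_ge : (1.0436 : ℝ) ≤ log (1 / 0.3521) := by
  rw [le_log_iff_exp_le (by norm_num), show (1.0436 : ℝ) = 1 + 0.0436 by norm_num, exp_add]
  nlinarith [exp_one_lt_d9, exp_pos 0.0436, exp_0436_le]

lemma one_div_exp_one_lt : 1 / exp 1 < 0.368 := by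
  rw [div_lt_iff₀ (exp_pos 1)]
  linarith [exp_one_gt_d9]

lemma le_of_le_log_one_div {c a : ℝ} (hc₀ : 0 ≤ c) (hc₂ : c ≤ 2) (ha : a ≤ log (1 / c)) :
    c * a + c ^ 2 / 2 * (1 / c - a - 1) ≤
      c * log (1 / c) + c ^ 2 / 2 * (1 / c - log (1 / c) - 1) := by
  nlinarith [mul_nonneg (mul_nonneg hc₀ (by linarith : 0 ≤ 2 - c)) (sub_nonneg.2 ha)]

theorem stmt_19 :
    let g : ℝ → ℝ := fun c =>
      c * Real.log (1 / c) + c ^ 2 / 2 * (1 / c - Real.log (1 / c) - 1)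
    g 0.3521 > 1 / Real.exp 1 ∧ g 0.3521 ≥ 0.4168 := by
  intro g
  have hg : g 0.3521 ≥ 0.4168 :=
    calc (0.4168 : ℝ)
        ≤ 0.3521 * 1.0436 + 0.3521 ^ 2 / 2 * (1 / 0.3521 - 1.0436 - 1) := by norm_num
      _ ≤ g 0.3521 := le_of_le_log_one_div (by norm_num) (by norm_num) log_inv_0_3521_ge
  exact ⟨by linarith [one_div_exp_one_lt], hg⟩
end
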